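/- Suppose (1/m)‖𝒜(X)‖₁ ≤ (√(2/π) + δ)‖X‖_F for every X ∈ ℝ^{n×n} of rank at most 2r. Then for all U, U' ∈ ℝ^{n×r}, |f(U') − f(U)| ≤ (√(2/π) + δ)·(‖U‖₂ + ‖U'‖₂)·‖U' − U‖_F, where ‖·‖₂ denotes the spectral norm (largest singular value) and ‖·‖_F the Frobenius norm. -/

import Mathlib

open Matrix
open scoped BigOperators

/-- Frobenius norm of a real matrix. -/
noncomputable def frobNorm {α β : Type*} [Fintype α] [Fintype β] (A : Matrix α β ℝ) : ℝ :=
  Real.sqrt (∑ i, ∑ j, (A i j) ^ 2)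

/-- ℓ₁-norm of a vector in `ℝ^m`. -/
noncomputable def l1Norm {m : ℕ} (v : Fin m → ℝ) : ℝ := ∑ i, |v i|

/-- The linear measurement operator `𝒜(X)ᵢ = ⟨Aᵢ, X⟩ = trace(Aᵢᵀ X)`. -/
noncomputable def measOp {α β : Type*} [Fintype α] [Fintype β] {m : ℕ}
    (A : Fin m → Matrix α β ℝ) (X : Matrix α β ℝ) : Fin m → ℝ :=
  fun i => ∑ j, ∑ k, A i j k * X j k

/-- Euclidean norm on `β → ℝ`. -/
noncomputable def e2norm {β : Type*} [Fintype β] (v : β → ℝ) : ℝ :=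
  Real.sqrt (∑ i, (v i) ^ 2)

/-- Spectral norm (largest singular value) of a real matrix. -/
noncomputable def specNorm {α β : Type*} [Fintype α] [Fintype β] (A : Matrix α β ℝ) : ℝ :=
  sSup {t : ℝ | ∃ x : β → ℝ, e2norm x = 1 ∧ t = e2norm (A.mulVec x)}

/-- The ℓ₁-loss objective `f(U) = (1/m) ‖y − 𝒜(UUᵀ)‖₁` in the PSD case. -/
noncomputable def objF {n r m : ℕ} (A : Fin m → Matrix (Fin n) (Fin n) ℝ)
    (y : Fin m → ℝ) (U : Matrix (Fin n) (Fin r) ℝ) : ℝ :=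
  (1 / m) * l1Norm (fun i => y i - measOp A (U * Uᵀ) i)

section Helpers

variable {α β γ : Type*} [Fintype α] [Fintype β] [Fintype γ]

lemma e2norm_eq_norm' (v : β → ℝ) : e2norm v = ‖(WithLp.equiv 2 (β → ℝ)).symm v‖ := by
  rw [EuclideanSpace.norm_eq]
  simp [e2norm, Real.norm_eq_abs, sq_abs]

lemma e2norm_add_le' (v w : β → ℝ) : e2norm (v + w) ≤ e2norm v + e2norm w := by
  rw [e2norm_eq_norm', e2norm_eq_norm', e2norm_eq_norm']
  exact norm_add_le _ _

lemma e2norm_sq' (v : β → ℝ) : e2norm v ^ 2 = ∑ i, v i ^ 2 := by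
  rw [e2norm, Real.sq_sqrt]; positivity

lemma frobNorm_eq' (A : Matrix α β ℝ) : frobNorm A = e2norm (fun p : α × β => A p.1 p.2) := by
  rw [frobNorm, e2norm, Fintype.sum_prod_type]

lemma frobNorm_nonneg' (A : Matrix α β ℝ) : 0 ≤ frobNorm A := Real.sqrt_nonneg _

lemma frobNorm_add_le' (X Y : Matrix α β ℝ) : frobNorm (X + Y) ≤ frobNorm X + frobNorm Y := by
  rw [frobNorm_eq', frobNorm_eq', frobNorm_eq']
  exact e2norm_add_le' _ _

lemma frobNorm_transpose' (A : Matrix α β ℝ) : frobNorm Aᵀ = frobNorm A := by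
  simp only [frobNorm, transpose_apply]
  rw [Finset.sum_comm]

lemma e2norm_mulVec_le_frob' (A : Matrix α β ℝ) (x : β → ℝ) :
    e2norm (A.mulVec x) ≤ frobNorm A * e2norm x := by
  have h1 : ∑ i, (A.mulVec x i) ^ 2 ≤ (∑ i, ∑ j, A i j ^ 2) * (∑ j, x j ^ 2) := by
    rw [Finset.sum_mul]
    refine Finset.sum_le_sum fun i _ => ?_
    simpa [Matrix.mulVec, dotProduct] using
      Finset.sum_mul_sq_le_sq_mul_sq Finset.univ (A i) x
  calc e2norm (A.mulVec x) = Real.sqrt (∑ i, (A.mulVec x i) ^ 2) := rfl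
    _ ≤ Real.sqrt ((∑ i, ∑ j, A i j ^ 2) * (∑ j, x j ^ 2)) := Real.sqrt_le_sqrt h1
    _ = frobNorm A * e2norm x := by
        rw [Real.sqrt_mul (by positivity)]; rfl

lemma specSet_bddAbove' (A : Matrix α β ℝ) :
    BddAbove {t : ℝ | ∃ x : β → ℝ, e2norm x = 1 ∧ t = e2norm (A.mulVec x)} := by
  refine ⟨frobNorm A, ?_⟩
  rintro t ⟨x, hx, rfl⟩
  simpa [hx] using e2norm_mulVec_le_frob' A x

lemma exists_unit' [Nonempty β] : ∃ x : β → ℝ, e2norm x = 1 := by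
  classical
  obtain ⟨i0⟩ := ‹Nonempty β›
  refine ⟨fun j => if j = i0 then 1 else 0, ?_⟩
  have : ∑ j, (if j = i0 then (1:ℝ) else 0) ^ 2 = 1 := by
    simp [apply_ite (· ^ 2)]
  rw [e2norm, this, Real.sqrt_one]

lemma le_specNorm' (A : Matrix α β ℝ) (x : β → ℝ) (hx : e2norm x = 1) :
    e2norm (A.mulVec x) ≤ specNorm A :=
  le_csSup (specSet_bddAbove' A) ⟨x, hx, rfl⟩

lemma specNorm_nonneg' [Nonempty β] (A : Matrix α β ℝ) : 0 ≤ specNorm A := by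
  obtain ⟨x, hx⟩ := exists_unit' (β := β)
  exact le_trans (Real.sqrt_nonneg _) (le_specNorm' A x hx)

lemma e2norm_mulVec_le_spec' [Nonempty β] (A : Matrix α β ℝ) (x : β → ℝ) :
    e2norm (A.mulVec x) ≤ specNorm A * e2norm x := by
  rcases eq_or_ne (e2norm x) 0 with h | h
  · have hx0 : x = 0 := by
      funext i
      have h0 : ∑ i, x i ^ 2 = 0 := by rw [← e2norm_sq', h]; ring
      have := (Finset.sum_eq_zero_iff_of_nonneg (fun i _ => sq_nonneg (x i))).1 h0 i
        (Finset.mem_univ i)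
      exact pow_eq_zero_iff (by norm_num) |>.1 this
    subst hx0
    simp only [Matrix.mulVec_zero, h, mul_zero]
    simp [e2norm]
  · have hpos : 0 < e2norm x := lt_of_le_of_ne (Real.sqrt_nonneg _) (Ne.symm h)
    have hsmul : e2norm ((e2norm x)⁻¹ • x) = 1 := by
      have : e2norm ((e2norm x)⁻¹ • x) = |(e2norm x)⁻¹| * e2norm x := by
        simp only [e2norm, Pi.smul_apply, smul_eq_mul, mul_pow, ← Finset.mul_sum]
        rw [Real.sqrt_mul (sq_nonneg _), Real.sqrt_sq_eq_abs]
      rw [this, abs_of_nonneg (by positivity), inv_mul_cancel₀ h]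
    have hle := le_specNorm' A _ hsmul
    rw [Matrix.mulVec_smul] at hle
    have heq : e2norm ((e2norm x)⁻¹ • A.mulVec x) = (e2norm x)⁻¹ * e2norm (A.mulVec x) := by
      simp only [e2norm, Pi.smul_apply, smul_eq_mul, mul_pow, ← Finset.mul_sum]
      rw [Real.sqrt_mul (sq_nonneg _), Real.sqrt_sq_eq_abs, abs_of_nonneg (by positivity)]
    rw [heq] at hle
    calc e2norm (A.mulVec x) = e2norm x * ((e2norm x)⁻¹ * e2norm (A.mulVec x)) := by
          field_simp
      _ ≤ e2norm x * specNorm A := mul_le_mul_of_nonneg_left hle (le_of_lt hpos)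
      _ = specNorm A * e2norm x := mul_comm _ _

lemma frobNorm_mul_le' [Nonempty β] (A : Matrix α β ℝ) (B : Matrix β γ ℝ) :
    frobNorm (A * B) ≤ specNorm A * frobNorm B := by
  have key : ∑ i, ∑ j, ((A * B) i j) ^ 2 ≤ specNorm A ^ 2 * ∑ k, ∑ j, (B k j) ^ 2 := by
    rw [Finset.sum_comm]
    calc ∑ j, ∑ i, ((A * B) i j) ^ 2
        = ∑ j, e2norm (A.mulVec (fun k => B k j)) ^ 2 := by
          refine Finset.sum_congr rfl fun j _ => ?_
          rw [e2norm_sq']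
          refine Finset.sum_congr rfl fun i _ => ?_
          simp [Matrix.mul_apply, Matrix.mulVec, dotProduct]
      _ ≤ ∑ j, (specNorm A * e2norm (fun k => B k j)) ^ 2 := by
          refine Finset.sum_le_sum fun j _ => ?_
          exact pow_le_pow_left₀ (Real.sqrt_nonneg _) (e2norm_mulVec_le_spec' A _) 2
      _ = specNorm A ^ 2 * ∑ j, ∑ k, (B k j) ^ 2 := by
          simp only [mul_pow, e2norm_sq', Finset.mul_sum]
      _ = specNorm A ^ 2 * ∑ k, ∑ j, (B k j) ^ 2 := by rw [Finset.sum_comm]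
  calc frobNorm (A * B) = Real.sqrt (∑ i, ∑ j, ((A * B) i j) ^ 2) := rfl
    _ ≤ Real.sqrt (specNorm A ^ 2 * ∑ k, ∑ j, (B k j) ^ 2) := Real.sqrt_le_sqrt key
    _ = specNorm A * frobNorm B := by
        rw [Real.sqrt_mul (sq_nonneg _), Real.sqrt_sq (specNorm_nonneg' A)]; rfl

set_option linter.unusedSectionVars false in
lemma matRank_add_le' (X Y : Matrix α β ℝ) : (X + Y).rank ≤ X.rank + Y.rank := by
  rw [Matrix.rank, Matrix.rank, Matrix.rank]
  have h : LinearMap.range (X + Y).mulVecLin ≤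
      LinearMap.range X.mulVecLin ⊔ LinearMap.range Y.mulVecLin := by
    rw [Matrix.mulVecLin_add]
    rintro v ⟨u, rfl⟩
    exact Submodule.add_mem_sup ⟨u, rfl⟩ ⟨u, rfl⟩
  exact le_trans (Submodule.finrank_mono h)
    (Submodule.finrank_add_le_finrank_add_finrank _ _)

lemma l1Norm_nonneg' {m : ℕ} (v : Fin m → ℝ) : 0 ≤ l1Norm v :=
  Finset.sum_nonneg fun i _ => abs_nonneg _

lemma l1_abs_sub' {m : ℕ} (a b : Fin m → ℝ) : |l1Norm a - l1Norm b| ≤ l1Norm (a - b) := by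
  rw [l1Norm, l1Norm, l1Norm, ← Finset.sum_sub_distrib]
  refine (Finset.abs_sum_le_sum_abs _ _).trans (Finset.sum_le_sum fun i _ => ?_)
  exact abs_abs_sub_abs_le_abs_sub _ _

lemma measOp_sub' {m : ℕ} (A : Fin m → Matrix α β ℝ) (X Y : Matrix α β ℝ) :
    measOp A (X - Y) = measOp A X - measOp A Y := by
  funext i
  simp [measOp, mul_sub, Finset.sum_sub_distrib]

end Helpers

/-- The Lipschitz-type estimate for `f`, the key step in the proof of Proposition 3.5. -/
theorem stmt9 {n r m : ℕ} (hm : 0 < m)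
    (A : Fin m → Matrix (Fin n) (Fin n) ℝ) (y : Fin m → ℝ) (δ : ℝ)
    (hRIPub : ∀ X : Matrix (Fin n) (Fin n) ℝ, X.rank ≤ 2 * r →
      (1 / m) * l1Norm (measOp A X) ≤ (Real.sqrt (2 / Real.pi) + δ) * frobNorm X) :
    ∀ U U' : Matrix (Fin n) (Fin r) ℝ,
      |objF A y U' - objF A y U| ≤
        (Real.sqrt (2 / Real.pi) + δ) * (specNorm U + specNorm U') * frobNorm (U' - U) := by
  intro U U'
  set C := Real.sqrt (2 / Real.pi) + δ with hCdef
  by_cases hr : r = 0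
  · subst hr
    have h1 : U * Uᵀ = U' * U'ᵀ := by
      funext i j; simp [Matrix.mul_apply]
    have h2 : frobNorm (U' - U) = 0 := by
      simp [frobNorm]
    rw [objF, objF, h1, sub_self, abs_zero, h2, mul_zero]
  by_cases hn : n = 0
  · subst hn
    have h1 : measOp A (U * Uᵀ) = measOp A (U' * U'ᵀ) := by
      funext i; simp [measOp]
    have h2 : frobNorm (U' - U) = 0 := by
      simp [frobNorm]
    rw [objF, objF, h1, sub_self, abs_zero, h2, mul_zero]
  haveI : Nonempty (Fin r) := ⟨⟨0, Nat.pos_of_ne_zero hr⟩⟩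
  classical
  -- C is nonnegative
  have hC : 0 ≤ C := by
    set i0 : Fin n := ⟨0, Nat.pos_of_ne_zero hn⟩
    set u : Matrix (Fin n) (Fin 1) ℝ := fun i _ => if i = i0 then 1 else 0 with hu
    set v : Matrix (Fin 1) (Fin n) ℝ := fun _ j => if j = i0 then 1 else 0 with hv
    have hX : (u * v).rank ≤ 2 * r := by
      refine le_trans (Matrix.rank_mul_le_left u v) ?_
      refine le_trans (Matrix.rank_le_card_width u) ?_
      simp only [Fintype.card_fin]
      have : 1 ≤ r := Nat.pos_of_ne_zero hr
      omega
    have hfrob : frobNorm (u * v) = 1 := by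
      have huv : ∀ i j, (u * v) i j = if i = i0 ∧ j = i0 then (1:ℝ) else 0 := by
        intro i j
        rw [Matrix.mul_apply]; simp only [hu, hv]
        by_cases h1 : i = i0 <;> by_cases h2 : j = i0 <;> simp [h1, h2]
      rw [frobNorm]
      have : ∑ i, ∑ j, ((u * v) i j) ^ 2 = 1 := by
        simp only [huv]
        simp [apply_ite (· ^ 2), ite_and, Finset.sum_ite_eq']
      rw [this, Real.sqrt_one]
    have h0 : (0:ℝ) ≤ (1 / m) * l1Norm (measOp A (u * v)) := by
      have := l1Norm_nonneg' (measOp A (u * v))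
      positivity
    have := hRIPub (u * v) hX
    rw [hfrob, mul_one] at this
    exact le_trans h0 this
  -- decomposition
  set D := U' - U with hD
  have hdecomp : U' * U'ᵀ - U * Uᵀ = U' * Dᵀ + D * Uᵀ := by
    rw [hD, Matrix.transpose_sub, Matrix.mul_sub, Matrix.sub_mul]
    abel
  have hrank : (U' * U'ᵀ - U * Uᵀ).rank ≤ 2 * r := by
    rw [hdecomp]
    refine le_trans (matRank_add_le' _ _) ?_
    have ha : (U' * Dᵀ).rank ≤ r :=
      le_trans (Matrix.rank_mul_le_left _ _)
        (le_trans (Matrix.rank_le_card_width _) (by simp))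
    have hb : (D * Uᵀ).rank ≤ r :=
      le_trans (Matrix.rank_mul_le_left _ _)
        (le_trans (Matrix.rank_le_card_width _) (by simp))
    omega
  have hfrobD : frobNorm (U' * U'ᵀ - U * Uᵀ) ≤ (specNorm U + specNorm U') * frobNorm D := by
    rw [hdecomp]
    refine le_trans (frobNorm_add_le' _ _) ?_
    have h1 : frobNorm (U' * Dᵀ) ≤ specNorm U' * frobNorm D := by
      have := frobNorm_mul_le' U' Dᵀ
      rwa [frobNorm_transpose'] at this
    have h2 : frobNorm (D * Uᵀ) ≤ specNorm U * frobNorm D := by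
      have heq : frobNorm (D * Uᵀ) = frobNorm (U * Dᵀ) := by
        rw [← frobNorm_transpose' (D * Uᵀ), Matrix.transpose_mul, Matrix.transpose_transpose]
      rw [heq]
      have := frobNorm_mul_le' U Dᵀ
      rwa [frobNorm_transpose'] at this
    nlinarith [frobNorm_nonneg' D]
  -- l1 estimate
  have hl1 : |l1Norm (fun i => y i - measOp A (U' * U'ᵀ) i) -
      l1Norm (fun i => y i - measOp A (U * Uᵀ) i)| ≤
      l1Norm (measOp A (U' * U'ᵀ - U * Uᵀ)) := by
    refine le_trans (l1_abs_sub' _ _) (le_of_eq ?_)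
    rw [measOp_sub']
    rw [l1Norm, l1Norm]
    refine Finset.sum_congr rfl fun i _ => ?_
    rw [Pi.sub_apply, Pi.sub_apply]
    rw [abs_sub_comm]
    congr 1
    ring
  have hmain := hRIPub (U' * U'ᵀ - U * Uᵀ) hrank
  have hm0 : (0:ℝ) ≤ 1 / m := by positivity
  calc |objF A y U' - objF A y U|
      = (1 / m) * |l1Norm (fun i => y i - measOp A (U' * U'ᵀ) i) -
          l1Norm (fun i => y i - measOp A (U * Uᵀ) i)| := by
        rw [objF, objF, ← mul_sub, abs_mul, abs_of_nonneg hm0]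
    _ ≤ (1 / m) * l1Norm (measOp A (U' * U'ᵀ - U * Uᵀ)) :=
        mul_le_mul_of_nonneg_left hl1 hm0
    _ ≤ C * frobNorm (U' * U'ᵀ - U * Uᵀ) := hmain
    _ ≤ C * ((specNorm U + specNorm U') * frobNorm D) :=
        mul_le_mul_of_nonneg_left hfrobD hC
    _ = C * (specNorm U + specNorm U') * frobNorm (U' - U) := by rw [← mul_assoc, hD]
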